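/- arXiv:1405.6428 — 4 statements merged into one kernel-verified Lean document; each statement's English description precedes it below -/
import Mathlib

section
/- Let Y be a ℂ-uniformly convex complex Banach space. Then Y contains no isomorphic copy of the complex space c₀; that is, there is no continuous linear map T from the complex space c₀ (of complex sequences converging to zero, with the supremum norm) into Y for which there exists a constant a > 0 with a‖x‖ ≤ ‖T x‖ for all x ∈ c₀. -/
open ZeroAtInfty

/-- The `ℂ`-modulus of convexity of a complex normed space `Y`:
`δ(ε) = inf { sup { ‖x + λ ε y‖ - 1 : λ ∈ ℂ, |λ| = 1 } : x, y ∈ S_Y }`. -/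
noncomputable def cModulus (Y : Type*) [NormedAddCommGroup Y] [NormedSpace ℂ Y] (ε : ℝ) : ℝ :=
  sInf { d : ℝ | ∃ x y : Y, ‖x‖ = 1 ∧ ‖y‖ = 1 ∧
    d = sSup { t : ℝ | ∃ lam : ℂ, ‖lam‖ = 1 ∧ t = ‖x + (lam * (ε : ℂ)) • y‖ - 1 } }

/-- basis vector of `c₀` -/
noncomputable def eVec (k : ℕ) : C₀(ℕ, ℂ) :=
  { toFun := fun n => if n = k then 1 else 0
    continuous_toFun := continuous_of_discreteTopology
    zero_at_infty' := by
      refine Filter.Tendsto.congr' ?_ tendsto_const_nhds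
      filter_upwards [Filter.mem_cocompact.mpr ⟨{k}, isCompact_singleton, subset_rfl⟩] with n hn
      simp only [Set.mem_compl_iff, Set.mem_singleton_iff] at hn
      simp [hn] }

lemma eVec_apply (k n : ℕ) : eVec k n = if n = k then 1 else 0 := rfl

lemma norm_C0_le (f : C₀(ℕ, ℂ)) {C : ℝ} (hC : 0 ≤ C) (h : ∀ n, ‖f n‖ ≤ C) : ‖f‖ ≤ C := by
  rw [← ZeroAtInftyContinuousMap.norm_toBCF_eq_norm]
  exact (BoundedContinuousFunction.norm_le hC).2 h

lemma apply_le_norm_C0 (f : C₀(ℕ, ℂ)) (n : ℕ) : ‖f n‖ ≤ ‖f‖ := by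
  rw [← ZeroAtInftyContinuousMap.norm_toBCF_eq_norm]
  exact BoundedContinuousFunction.norm_coe_le_norm f.toBCF n

lemma norm_eVec (k : ℕ) : ‖eVec k‖ = 1 := by
  refine le_antisymm (norm_C0_le _ zero_le_one fun n => ?_) ?_
  · rw [eVec_apply]; split <;> simp
  · have := apply_le_norm_C0 (eVec k) k
    simpa [eVec_apply] using this

/-- Key consequence of complex uniform convexity. -/
lemma key (Y : Type*) [NormedAddCommGroup Y] [NormedSpace ℂ Y]
    {ε : ℝ} (hε : 0 < ε) (hδ : 0 < cModulus Y ε)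
    (x y : Y) (hx : ‖x‖ = 1) (hy : ‖y‖ = 1) :
    ∃ lam : ℂ, ‖lam‖ = 1 ∧ 1 + cModulus Y ε / 2 ≤ ‖x + (lam * (ε : ℂ)) • y‖ := by
  -- generic bounds on the inner sets
  have hbddS : ∀ x' y' : Y, ‖x'‖ = 1 → ‖y'‖ = 1 → ∀ t ∈
      { t : ℝ | ∃ lam : ℂ, ‖lam‖ = 1 ∧ t = ‖x' + (lam * (ε : ℂ)) • y'‖ - 1 }, t ≤ ε := by
    rintro x' y' hx' hy' t ⟨lam, hlam, rfl⟩
    have h1 : ‖x' + (lam * (ε : ℂ)) • y'‖ ≤ ‖x'‖ + ‖(lam * (ε : ℂ)) • y'‖ := norm_add_le _ _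
    have h2 : ‖(lam * (ε : ℂ)) • y'‖ = ε := by
      rw [norm_smul, hy', norm_mul, hlam, Complex.norm_real, Real.norm_of_nonneg hε.le]
      ring
    rw [h2, hx'] at h1
    linarith
  have hneS : ∀ x' y' : Y, (‖x' + ((1 : ℂ) * (ε : ℂ)) • y'‖ - 1) ∈
      { t : ℝ | ∃ lam : ℂ, ‖lam‖ = 1 ∧ t = ‖x' + (lam * (ε : ℂ)) • y'‖ - 1 } := by
    intro x' y'; exact ⟨1, by simp, rfl⟩
  set S := { t : ℝ | ∃ lam : ℂ, ‖lam‖ = 1 ∧ t = ‖x + (lam * (ε : ℂ)) • y‖ - 1 } with hS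
  have hSne : S.Nonempty := ⟨_, hneS x y⟩
  have hSbdd : BddAbove S := ⟨ε, fun t ht => hbddS x y hx hy t ht⟩
  -- cModulus ≤ sSup S
  have hmem : sSup S ∈ { d : ℝ | ∃ x' y' : Y, ‖x'‖ = 1 ∧ ‖y'‖ = 1 ∧
      d = sSup { t : ℝ | ∃ lam : ℂ, ‖lam‖ = 1 ∧ t = ‖x' + (lam * (ε : ℂ)) • y'‖ - 1 } } :=
    ⟨x, y, hx, hy, rfl⟩
  have hbddBelow : BddBelow { d : ℝ | ∃ x' y' : Y, ‖x'‖ = 1 ∧ ‖y'‖ = 1 ∧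
      d = sSup { t : ℝ | ∃ lam : ℂ, ‖lam‖ = 1 ∧ t = ‖x' + (lam * (ε : ℂ)) • y'‖ - 1 } } := by
    refine ⟨-1, ?_⟩
    rintro d ⟨x', y', hx', hy', rfl⟩
    have h1 : (‖x' + ((1 : ℂ) * (ε : ℂ)) • y'‖ - 1) ≤ sSup _ :=
      le_csSup ⟨ε, fun t ht => hbddS x' y' hx' hy' t ht⟩ (hneS x' y')
    have h2 : (0 : ℝ) ≤ ‖x' + ((1 : ℂ) * (ε : ℂ)) • y'‖ := norm_nonneg _
    linarith
  have hle : cModulus Y ε ≤ sSup S := csInf_le hbddBelow hmem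
  have hlt : cModulus Y ε / 2 < sSup S := lt_of_lt_of_le (by linarith) hle
  obtain ⟨t, ⟨lam, hlam, rfl⟩, ht⟩ := exists_lt_of_lt_csSup hSne hlt
  exact ⟨lam, hlam, by linarith⟩

/-- A `ℂ`-uniformly convex complex Banach space contains no isomorphic
copy of the complex space `c₀` (here realized as `C₀(ℕ, ℂ)`, the complex sequences
converging to zero with the supremum norm): there is no continuous linear map
`T : c₀ → Y` bounded below. -/
theorem stmt_3 (Y : Type*) [NormedAddCommGroup Y] [NormedSpace ℂ Y] [CompleteSpace Y]
    (hY : ∀ ε : ℝ, 0 < ε → 0 < cModulus Y ε) :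
    ¬ ∃ (T : C₀(ℕ, ℂ) →L[ℂ] Y) (a : ℝ), 0 < a ∧ ∀ x : C₀(ℕ, ℂ), a * ‖x‖ ≤ ‖T x‖ := by
  rintro ⟨T, a, ha, hbd⟩
  have hTe : ∀ k, a ≤ ‖T (eVec k)‖ := fun k => by
    have := hbd (eVec k); rwa [norm_eVec, mul_one] at this
  have hTpos : 0 < ‖T‖ := by
    have h1 := hTe 0
    have h2 : ‖T (eVec 0)‖ ≤ ‖T‖ * ‖eVec 0‖ := T.le_opNorm _
    rw [norm_eVec, mul_one] at h2
    linarith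
  set ε : ℝ := a / ‖T‖ with hε_def
  have hε : 0 < ε := div_pos ha hTpos
  set δ : ℝ := cModulus Y ε with hδ_def
  have hδ : 0 < δ := hY ε hε
  -- main inductive construction
  have main : ∀ n : ℕ, ∃ v : C₀(ℕ, ℂ), ‖v‖ ≤ 1 ∧ a * (1 + δ / 2) ^ n ≤ ‖T v‖ ∧
      ∀ m, n < m → v m = 0 := by
    intro n
    induction n with
    | zero =>
      refine ⟨eVec 0, (norm_eVec 0).le, by simpa using hTe 0, fun m hm => ?_⟩
      rw [eVec_apply, if_neg (by omega)]
    | succ n ih =>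
      obtain ⟨v, hv1, hv2, hv3⟩ := ih
      have hpow : (1 : ℝ) ≤ (1 + δ / 2) ^ n := one_le_pow₀ (by linarith)
      have hTv_pos : 0 < ‖T v‖ := lt_of_lt_of_le (by nlinarith) hv2
      have hTv_le : ‖T v‖ ≤ ‖T‖ := by
        have := T.le_opNorm v
        nlinarith
      have hTe_pos : 0 < ‖T (eVec (n + 1))‖ := lt_of_lt_of_le ha (hTe (n + 1))
      set x : Y := ((‖T v‖ : ℂ))⁻¹ • T v with hx_def
      set y : Y := ((‖T (eVec (n + 1))‖ : ℂ))⁻¹ • T (eVec (n + 1)) with hy_def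
      have hx : ‖x‖ = 1 := by
        rw [hx_def, norm_smul, norm_inv, Complex.norm_real, Real.norm_of_nonneg hTv_pos.le,
          inv_mul_cancel₀ hTv_pos.ne']
      have hy : ‖y‖ = 1 := by
        rw [hy_def, norm_smul, norm_inv, Complex.norm_real, Real.norm_of_nonneg hTe_pos.le,
          inv_mul_cancel₀ hTe_pos.ne']
      obtain ⟨lam, hlam, hkey⟩ := key Y hε hδ x y hx hy
      set μ : ℂ := lam * (ε : ℂ) * (‖T v‖ : ℂ) * ((‖T (eVec (n + 1))‖ : ℂ))⁻¹ with hμ_def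
      refine ⟨v + μ • eVec (n + 1), ?_, ?_, ?_⟩
      · -- norm bound
        have hμ_norm : ‖μ‖ ≤ 1 := by
          rw [hμ_def, norm_mul, norm_mul, norm_mul, hlam, norm_inv, Complex.norm_real,
            Complex.norm_real, Complex.norm_real, Real.norm_of_nonneg hε.le,
            Real.norm_of_nonneg hTv_pos.le, Real.norm_of_nonneg hTe_pos.le, one_mul]
          rw [hε_def]
          rw [div_mul_eq_mul_div, mul_inv_le_iff₀ hTe_pos, one_mul]
          rw [div_le_iff₀ hTpos]
          nlinarith [hTe (n + 1)]
        refine norm_C0_le _ zero_le_one fun m => ?_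
        have happ : (v + μ • eVec (n + 1)) m = v m + μ * (eVec (n + 1) m) := by
          simp
        rw [happ, eVec_apply]
        by_cases hm : m = n + 1
        · rw [if_pos hm, hv3 m (by omega), zero_add, mul_one]
          exact hμ_norm
        · rw [if_neg hm, mul_zero, add_zero]
          exact le_trans (apply_le_norm_C0 v m) hv1
      · -- growth bound
        have hTv' : T (v + μ • eVec (n + 1)) = (‖T v‖ : ℂ) • (x + (lam * (ε : ℂ)) • y) := by
          rw [map_add, map_smul, hx_def, hy_def, smul_add, smul_smul, smul_smul, smul_smul]
          congr 2
          · rw [mul_inv_cancel₀ (by exact_mod_cast hTv_pos.ne'), one_smul]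
          · rw [hμ_def]; ring
        rw [hTv', norm_smul, Complex.norm_real, Real.norm_of_nonneg hTv_pos.le]
        calc a * (1 + δ / 2) ^ (n + 1) = (a * (1 + δ / 2) ^ n) * (1 + δ / 2) := by ring
          _ ≤ ‖T v‖ * (1 + δ / 2) := by nlinarith
          _ ≤ ‖T v‖ * ‖x + (lam * (ε : ℂ)) • y‖ := by
              have := hkey; nlinarith
      · intro m hm
        have h1 : v m = 0 := hv3 m (by omega)
        have h2 : (eVec (n + 1)) m = 0 := by rw [eVec_apply, if_neg (by omega)]
        simp [h1, h2]
  -- derive contradiction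
  obtain ⟨n, hn⟩ := pow_unbounded_of_one_lt (‖T‖ / a) (by linarith : (1 : ℝ) < 1 + δ / 2)
  obtain ⟨v, hv1, hv2, -⟩ := main n
  have h1 : ‖T v‖ ≤ ‖T‖ := by
    have := T.le_opNorm v; nlinarith
  have h2 : ‖T‖ < a * (1 + δ / 2) ^ n := by
    rw [div_lt_iff₀ ha] at hn; linarith [hn]
  linarith
end

section
/- Let X be a complex Banach space. If the underlying real normed space of X contains an isomorphic copy of the real space c₀ (i.e., there is a continuous real-linear map T from real c₀ into X and a constant a > 0 with a‖x‖ ≤ ‖T x‖ for all x), then X contains an isomorphic copy of the complex space c₀ (i.e., there is a continuous complex-linear map S from complex c₀ into X and a constant b > 0 with b‖x‖ ≤ ‖S x‖ for all x). -/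
/-!
Put `x t = T eₜ`. These vectors are bounded, `a`-separated and weakly `ℓ¹`: for a complex
functional `g`, `g ∘ T_ℂ` with `T_ℂ μ = T (Re μ) + i T (Im μ)` is a functional on complex `c₀`,
and a functional on `c₀` is summable on the unit vectors (test it on finitely supported vectors of
modulus-one entries). A bounded separated sequence cannot stay within `a/3` of a finite-dimensional
subspace, so Hahn–Banach gives recursively `m₀ < m₁ < …` and functionals `gₖ` of norm `≤ 3/a` with
`gₖ (x mₖ) = 1`, `gₖ (x mⱼ) = 0` for `j < k`, and `∑_{j > k} ‖gₖ (x mⱼ)‖ ≤ 1/2` (a tail of a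
convergent series). For `S = T_ℂ ∘ (eⱼ ↦ e_{mⱼ})` this gives `‖gₖ (S μ) - μₖ‖ ≤ ‖μ‖/2`,
hence `‖μ‖ ≤ (6/a) ‖S μ‖`.
-/

open ZeroAtInfty Filter Metric Topology

namespace ZeroAtInftyContinuousMap

section

variable {α E : Type*} [TopologicalSpace α] [NormedAddCommGroup E]

theorem norm_apply_le (μ : C₀(α, E)) (i : α) : ‖μ i‖ ≤ ‖μ‖ :=
  μ.toBCF.norm_coe_le_norm i

theorem norm_le_of_forall_le {μ : C₀(α, E)} {C : ℝ} (hC : 0 ≤ C) (h : ∀ i, ‖μ i‖ ≤ C) :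
    ‖μ‖ ≤ C :=
  (BoundedContinuousFunction.norm_le hC).2 h

theorem coe_sum {ι : Type*} (s : Finset ι) (F : ι → C₀(α, E)) :
    ⇑(∑ k ∈ s, F k) = ∑ k ∈ s, ⇑(F k) :=
  map_sum (⟨⟨(⇑), coe_zero⟩, coe_add⟩ : C₀(α, E) →+ α → E) F s

variable [DiscreteTopology α]

def ofTendsto (f : α → E) (hf : Tendsto f cofinite (𝓝 0)) : C₀(α, E) :=
  ⟨⟨f, continuous_of_discreteTopology⟩, by rwa [cocompact_eq_cofinite]⟩

@[simp]
theorem ofTendsto_apply (f : α → E) (hf : Tendsto f cofinite (𝓝 0)) (i : α) :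
    ofTendsto f hf i = f i :=
  rfl

theorem tendsto_cofinite (μ : C₀(α, E)) : Tendsto μ cofinite (𝓝 0) := by
  simpa only [cocompact_eq_cofinite] using zero_at_infty μ

variable [DecidableEq α]

def single (i : α) (c : E) : C₀(α, E) :=
  ofTendsto (Pi.single i c) <| tendsto_nhds_of_eventually_eq <|
    (eventually_cofinite_ne i).mono fun _ hj => by simp [hj]

@[simp]
theorem coe_single (i : α) (c : E) : ⇑(single i c) = Pi.single i c :=
  rfl

@[simp]
theorem single_zero (i : α) : single i (0 : E) = 0 := by
  ext
  simp

theorem norm_single (i : α) (c : E) : ‖single i c‖ = ‖c‖ := by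
  refine le_antisymm (norm_le_of_forall_le (norm_nonneg c) fun j => ?_) ?_
  · by_cases h : j = i <;> simp [h]
  · simpa using norm_apply_le (single i c) i

theorem hasSum_single (μ : C₀(α, E)) : HasSum (fun i => single i (μ i)) μ := by
  refine Metric.tendsto_nhds.2 fun ε hε => ?_
  have hfin : {i | ε / 2 ≤ ‖μ i‖}.Finite := by
    simpa using (tendsto_cofinite μ).eventually (ball_mem_nhds 0 (half_pos hε))
  filter_upwards [eventually_ge_atTop hfin.toFinset] with s hs
  rw [dist_eq_norm]
  refine (norm_le_of_forall_le (μ := ∑ i ∈ s, single i (μ i) - μ) (half_pos hε).le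
    fun i => ?_).trans_lt (half_lt_self hε)
  rw [coe_sub, coe_sum, Pi.sub_apply, Finset.sum_apply]
  simp only [coe_single, Finset.sum_pi_single]
  split_ifs with hi
  · simp [(half_pos hε).le]
  · have : ‖μ i‖ < ε / 2 := not_le.1 fun h => hi (hs (by simpa using h))
    simpa using this.le

theorem single_eq_smul {𝕜 : Type*} [NormedField 𝕜] [NormedSpace 𝕜 E] (i : α) (c : 𝕜) (x : E) :
    single i (c • x) = c • single i x := by
  ext j
  simp [Pi.single_apply]

end

section Operators

variable {α β 𝕜 E F : Type*} [TopologicalSpace α] [NontriviallyNormedField 𝕜]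
  [NormedAddCommGroup E] [NormedSpace 𝕜 E] [NormedAddCommGroup F] [NormedSpace 𝕜 F]

noncomputable def compLeftCLM (L : E →L[𝕜] F) : C₀(α, E) →L[𝕜] C₀(α, F) :=
  LinearMap.mkContinuous
    { toFun μ := ⟨⟨L ∘ μ, L.continuous.comp μ.continuous⟩, by
        simpa using (L.continuous.tendsto 0).comp (zero_at_infty μ)⟩
      map_add' μ ν := by ext; simp
      map_smul' c μ := by ext; simp }
    ‖L‖ fun μ => norm_le_of_forall_le (by positivity) fun i =>
      (L.le_opNorm (μ i)).trans (by gcongr; exact norm_apply_le μ i)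

@[simp]
theorem compLeftCLM_apply (L : E →L[𝕜] F) (μ : C₀(α, E)) (i : α) : compLeftCLM L μ i = L (μ i) :=
  rfl

variable [DiscreteTopology α]

theorem compLeftCLM_single [DecidableEq α] (L : E →L[𝕜] F) (i : α) (c : E) :
    compLeftCLM L (single i c) = single i (L c) := by
  ext j
  simp [Pi.single_apply, apply_ite L]

theorem tendsto_extend_cofinite {m : α → β} (hm : m.Injective) (μ : C₀(α, E)) :
    Tendsto (Function.extend m μ 0) cofinite (𝓝 0) := fun U hU => by
  refine ((tendsto_cofinite μ hU).image m).subset fun j hj => ?_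
  by_cases h : ∃ i, m i = j
  · obtain ⟨i, rfl⟩ := h
    exact ⟨i, by simpa [hm.extend_apply] using hj, rfl⟩
  · exact absurd (mem_of_mem_nhds hU) (by simpa [Function.extend_apply' _ _ _ h] using hj)

variable [TopologicalSpace β] [DiscreteTopology β]

noncomputable def extendByZeroCLM {m : α → β} (hm : m.Injective) : C₀(α, E) →L[𝕜] C₀(β, E) :=
  LinearMap.mkContinuous
    { toFun μ := ofTendsto _ (tendsto_extend_cofinite hm μ)
      map_add' μ ν := by ext; simpa using congrFun (Function.extend_add m μ ν 0 0) _
      map_smul' c μ := by ext; simpa using congrFun (Function.extend_smul c m μ 0) _ }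
    1 fun μ => by
      refine norm_le_of_forall_le (by positivity) fun j => ?_
      by_cases h : ∃ i, m i = j
      · obtain ⟨i, rfl⟩ := h
        simpa [hm.extend_apply] using norm_apply_le μ i
      · simp [Function.extend_apply' _ _ _ h]

theorem extendByZeroCLM_single [DecidableEq α] [DecidableEq β] {m : α → β} (hm : m.Injective)
    (i : α) (c : E) :
    extendByZeroCLM (𝕜 := 𝕜) hm (single i c) = single (m i) c := by
  ext j
  by_cases h : ∃ k, m k = j
  · obtain ⟨k, rfl⟩ := h
    simp [extendByZeroCLM, hm.extend_apply, Pi.single_apply, hm.eq_iff]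
  · have hj : j ≠ m i := fun e => h ⟨i, e.symm⟩
    simp [extendByZeroCLM, Function.extend_apply' _ _ _ h, hj]

end Operators

section Complexify

variable {α X : Type*} [TopologicalSpace α] [NormedAddCommGroup X] [NormedSpace ℂ X]

local notation "reC" => compLeftCLM (α := α) Complex.reCLM
local notation "imC" => compLeftCLM (α := α) Complex.imCLM

noncomputable def complexify (T : C₀(α, ℝ) →L[ℝ] X) : C₀(α, ℂ) →L[ℂ] X where
  toFun μ := T (reC μ) + Complex.I • T (imC μ)
  map_add' μ ν := by
    simp only [map_add, smul_add]
    abel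
  map_smul' c μ := by
    have hre : reC (c • μ) = c.re • reC μ - c.im • imC μ := by ext; simp
    have him : imC (c • μ) = c.re • imC μ + c.im • reC μ := by ext; simp
    rw [hre, him, RingHom.id_apply]
    simp only [map_sub, map_add, map_smul, ← Complex.coe_smul]
    conv_rhs => rw [← Complex.re_add_im c]
    match_scalars
    · ring
    · linear_combination -(c.im : ℂ) * Complex.I_sq
  cont := ((T.comp (compLeftCLM Complex.reCLM)).continuous).add
    (((T.comp (compLeftCLM Complex.imCLM)).continuous).const_smul Complex.I)

theorem complexify_single [DiscreteTopology α] [DecidableEq α] (T : C₀(α, ℝ) →L[ℝ] X) (i : α) :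
    complexify T (single i 1) = T (single i 1) := by
  change T (reC _) + Complex.I • T (imC _) = _
  simp [compLeftCLM_single]

end Complexify

section Dual

variable {α 𝕜 X : Type*} [TopologicalSpace α] [DiscreteTopology α] [DecidableEq α] [RCLike 𝕜]
  [NormedAddCommGroup X] [NormedSpace 𝕜 X]

theorem sum_norm_apply_single_le (φ : StrongDual 𝕜 C₀(α, 𝕜)) (s : Finset α) :
    ∑ i ∈ s, ‖φ (single i 1)‖ ≤ ‖φ‖ := by
  set z : α → 𝕜 := fun i => φ (single i 1)
  set u : α → 𝕜 := fun i => starRingEnd 𝕜 (z i) / ‖z i‖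
  have hu : ∀ i, ‖u i‖ ≤ 1 := fun i => by
    simpa [u] using div_self_le_one ‖z i‖
  have huz : ∀ i, u i * z i = ‖z i‖ := fun i => by
    rcases eq_or_ne (z i) 0 with h | h
    · simp [h]
    · rw [div_mul_eq_mul_div, RCLike.conj_mul, pow_two, mul_div_assoc,
        div_self (by simpa using h), mul_one]
  set w := ∑ i ∈ s, single i (u i)
  have hw : ‖w‖ ≤ 1 := norm_le_of_forall_le zero_le_one fun j => by
    simp only [w, coe_sum, Finset.sum_apply, coe_single, Finset.sum_pi_single]
    split_ifs
    exacts [hu j, by simp]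
  have hφw : φ w = ((∑ i ∈ s, ‖z i‖ : ℝ) : 𝕜) := by
    simp only [w, map_sum, ← huz]
    refine Finset.sum_congr rfl fun i _ => ?_
    rw [← smul_eq_mul, ← map_smul, ← single_eq_smul, smul_eq_mul, mul_one]
  calc ∑ i ∈ s, ‖z i‖ = ‖φ w‖ := by
        rw [hφw, RCLike.norm_ofReal, abs_of_nonneg (Finset.sum_nonneg fun i _ => norm_nonneg _)]
    _ ≤ ‖φ‖ * ‖w‖ := φ.le_opNorm w
    _ ≤ ‖φ‖ := mul_le_of_le_one_right (norm_nonneg φ) hw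

theorem summable_norm_apply_single (φ : StrongDual 𝕜 C₀(α, 𝕜)) :
    Summable fun i => ‖φ (single i 1)‖ :=
  summable_of_sum_le (fun _ => norm_nonneg _) (sum_norm_apply_single_le φ)

theorem norm_apply_sub_le (φ : StrongDual 𝕜 C₀(α, 𝕜)) (k : α) (μ : C₀(α, 𝕜)) :
    ‖φ μ - μ k‖ ≤ (∑' j, ‖φ (single j 1) - if j = k then 1 else 0‖) * ‖μ‖ := by
  have hexp : HasSum (fun j => μ j * (φ (single j 1) - if j = k then 1 else 0)) (φ μ - μ k) := by
    have h := ((hasSum_single μ).mapL φ).sub (hasSum_ite_eq k (μ k))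
    refine h.congr_fun fun j => ?_
    rw [mul_sub, ← smul_eq_mul, ← map_smul, ← single_eq_smul, smul_eq_mul, mul_one]
    split_ifs with hj
    · rw [hj, mul_one]
    · rw [mul_zero]
  have hsumm : Summable fun j => ‖φ (single j 1) - if j = k then 1 else 0‖ := by
    refine .of_nonneg_of_le (fun _ => norm_nonneg _) (fun j => (norm_sub_le _ _).trans ?_)
      ((summable_norm_apply_single φ).add (hasSum_ite_eq k (1 : ℝ)).summable)
    split_ifs <;> simp
  rw [mul_comm]
  refine hexp.norm_le_of_bounded (hsumm.hasSum.mul_left ‖μ‖) fun j => ?_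
  rw [norm_mul]
  gcongr
  exact norm_apply_le μ j

theorem norm_le_of_tsum_norm_sub_le [Nonempty α]
    {S : C₀(α, 𝕜) →L[𝕜] X} {g : α → StrongDual 𝕜 X} {C δ : ℝ} (hg : ∀ k, ‖g k‖ ≤ C)
    (hδ : ∀ k, ∑' j, ‖g k (S (single j 1)) - if j = k then 1 else 0‖ ≤ δ) (μ : C₀(α, 𝕜)) :
    (1 - δ) * ‖μ‖ ≤ C * ‖S μ‖ := by
  suffices ‖μ‖ ≤ C * ‖S μ‖ + δ * ‖μ‖ by linarith
  refine (BoundedContinuousFunction.norm_le_of_nonempty (f := μ.toBCF)).2 fun k => ?_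
  have hk : ‖g k (S μ) - μ k‖ ≤ δ * ‖μ‖ :=
    (norm_apply_sub_le ((g k).comp S) k μ).trans (by gcongr; exact hδ k)
  change ‖μ k‖ ≤ _
  calc ‖μ k‖ ≤ ‖g k (S μ)‖ + ‖g k (S μ) - μ k‖ := norm_le_insert _ _
    _ ≤ C * ‖S μ‖ + δ * ‖μ‖ := by
      gcongr
      exact (g k).le_of_opNorm_le (hg k) (S μ)

end Dual

end ZeroAtInftyContinuousMap

section Banach

variable {𝕜 X : Type*} [RCLike 𝕜] [NormedAddCommGroup X] [NormedSpace 𝕜 X]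

theorem exists_ne_dist_lt_of_isBounded {E : Type*} [PseudoMetricSpace E] [ProperSpace E]
    {y : ℕ → E} (hy : Bornology.IsBounded (Set.range y)) {ε : ℝ} (hε : 0 < ε) :
    ∃ i j, i ≠ j ∧ dist (y i) (y j) < ε := by
  obtain ⟨_, -, φ, hφ, hlim⟩ := tendsto_subseq_of_bounded hy Set.mem_range_self
  obtain ⟨N, hN⟩ := Metric.cauchySeq_iff'.1 hlim.cauchySeq ε hε
  exact ⟨φ (N + 1), φ N, hφ.injective.ne (by omega), hN _ (by omega)⟩

theorem exists_le_infDist_of_separated (F : Submodule 𝕜 X) [FiniteDimensional 𝕜 F]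
    {x : ℕ → X} {C a : ℝ} (hC : ∀ i, ‖x i‖ ≤ C) (hsep : ∀ i j, i ≠ j → a ≤ dist (x i) (x j))
    (N : ℕ) : ∃ m, N ≤ m ∧ a / 3 ≤ infDist (x m) F := by
  by_contra! hnear
  -- points of `F` within `a/3` of the `x (N + i)` would be bounded in `F` yet `a/3`-separated
  have hy : ∀ i, ∃ y ∈ F, dist (x (N + i)) y < a / 3 := fun i =>
    (infDist_lt_iff ⟨0, F.zero_mem⟩).1 (hnear _ (by omega))
  choose y hyF hy using hy
  let z : ℕ → F := fun i => ⟨y i, hyF i⟩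
  have hz : Bornology.IsBounded (Set.range z) := by
    refine isBounded_iff_forall_norm_le.2 ⟨C + a / 3, ?_⟩
    rintro _ ⟨i, rfl⟩
    have := norm_sub_norm_le (y i) (x (N + i))
    rw [← dist_eq_norm, dist_comm] at this
    linarith [hC (N + i), hy i, show ‖z i‖ = ‖y i‖ from rfl]
  obtain ⟨i, j, hij, hzij⟩ := exists_ne_dist_lt_of_isBounded hz (dist_nonneg.trans_lt (hy 0))
  have hyij : dist (y i) (y j) < a / 3 := hzij
  linarith [hsep (N + i) (N + j) (by omega), hy i, hy j, dist_comm (y j) (x (N + j)),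
    dist_triangle4 (x (N + i)) (y i) (y j) (x (N + j))]

theorem exists_dual_eq_one_of_le_infDist (F : Submodule 𝕜 X) {r : ℝ} (hr : 0 < r) {v : X}
    (hv : r ≤ infDist v F) : ∃ g : StrongDual 𝕜 X, ‖g‖ ≤ r⁻¹ ∧ g v = 1 ∧ ∀ w ∈ F, g w = 0 := by
  set q := F.mkQL v
  have hrq : r ≤ ‖q‖ := hv.trans_eq (QuotientAddGroup.norm_mk v : ‖q‖ = infDist v F).symm
  have hq : 0 < ‖q‖ := hr.trans_le hrq
  obtain ⟨G, hG, hGq⟩ := exists_dual_vector 𝕜 q hq.ne'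
  have hmkQL : ‖F.mkQL‖ ≤ 1 := ContinuousLinearMap.opNorm_le_bound _ zero_le_one fun w => by
    simpa using Submodule.Quotient.norm_mk_le F w
  refine ⟨(‖q‖⁻¹ : 𝕜) • G.comp F.mkQL, ?_, ?_, fun w hw => ?_⟩
  · calc ‖(‖q‖⁻¹ : 𝕜) • G.comp F.mkQL‖ ≤ ‖q‖⁻¹ * (‖G‖ * ‖F.mkQL‖) := by
          grw [norm_smul, ContinuousLinearMap.opNorm_comp_le]
          simp
      _ ≤ r⁻¹ := by
          rw [hG, one_mul]
          grw [hmkQL, mul_one]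
          exact inv_anti₀ hr hrq
  · rw [smul_apply, ContinuousLinearMap.comp_apply, hGq, smul_eq_mul]
    exact inv_mul_cancel₀ (RCLike.ofReal_ne_zero.2 hq.ne')
  · simp [(Submodule.Quotient.mk_eq_zero F).2 hw]

theorem tsum_ite_lt_comp_le_tsum_nat_add {f : ℕ → ℝ} (hf : Summable f) (h0 : ∀ t, 0 ≤ f t)
    {m : ℕ → ℕ} (hm : StrictMono m) (k : ℕ) :
    ∑' j, (if k < j then f (m j) else 0) ≤ ∑' t, f (t + m (k + 1)) := by
  set G : ℕ → ℝ := fun t => if m (k + 1) ≤ t then f t else 0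
  have hG0 : ∀ t, 0 ≤ G t := fun t => by
    simp only [G]
    split_ifs
    exacts [h0 t, le_rfl]
  have hG : Summable G := hf.of_nonneg_of_le hG0 fun t => by
    simp only [G]
    split_ifs
    exacts [le_rfl, h0 t]
  calc ∑' j, (if k < j then f (m j) else 0) = ∑' j, G (m j) := by
        simp only [G, hm.le_iff_le, Order.add_one_le_iff]
    _ ≤ ∑' t, G t := tsum_comp_le_tsum_of_inj hG hG0 hm.injective
    _ = ∑' t, f (t + m (k + 1)) := by
      rw [← hG.sum_add_tsum_nat_add (m (k + 1)),
        Finset.sum_eq_zero fun t ht => if_neg (by simpa using ht), zero_add]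
      exact tsum_congr fun t => if_pos (Nat.le_add_left _ _)

theorem exists_strictMono_tsum_norm_sub_le {x : ℕ → X} {C a δ : ℝ} (hC : ∀ i, ‖x i‖ ≤ C)
    (ha : 0 < a) (hsep : ∀ i j, i ≠ j → a ≤ dist (x i) (x j))
    (hsum : ∀ g : StrongDual 𝕜 X, Summable fun i => ‖g (x i)‖) (hδ : 0 < δ) :
    ∃ m : ℕ → ℕ, StrictMono m ∧ ∃ g : ℕ → StrongDual 𝕜 X, (∀ k, ‖g k‖ ≤ 3 / a) ∧
      ∀ k, ∑' j, ‖g k (x (m j)) - if j = k then 1 else 0‖ ≤ δ := by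
  -- `q = (M, g)`: `g` vanishes on the earlier `x`'s, whose functionals have small tails beyond `M`
  have hstep : ∀ s : Finset (ℕ × StrongDual 𝕜 X), ∃ q : ℕ × StrongDual 𝕜 X,
      (‖q.2‖ ≤ 3 / a ∧ q.2 (x q.1) = 1) ∧
        ∀ p ∈ s, p.1 < q.1 ∧ q.2 (x p.1) = 0 ∧ ∑' t, ‖p.2 (x (t + q.1))‖ ≤ δ := by
    intro s
    have hev : ∀ᶠ M in atTop, ∀ p ∈ s, p.1 < M ∧ ∑' t, ‖p.2 (x (t + M))‖ ≤ δ := by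
      refine (eventually_all_finset s).2 fun p _ => (eventually_gt_atTop p.1).and ?_
      exact (tendsto_sum_nat_add fun t => ‖p.2 (x t)‖).eventually (eventually_le_nhds hδ)
    obtain ⟨N, hN⟩ := hev.exists_forall_of_atTop
    let F := Submodule.span 𝕜 ((fun p => x p.1) '' (s : Set (ℕ × StrongDual 𝕜 X)))
    have : FiniteDimensional 𝕜 F := FiniteDimensional.span_of_finite 𝕜 (s.finite_toSet.image _)
    obtain ⟨M, hNM, hfar⟩ := exists_le_infDist_of_separated F hC hsep N
    obtain ⟨g, hg, hgx, hgF⟩ := exists_dual_eq_one_of_le_infDist F (by positivity) hfar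
    refine ⟨(M, g), ⟨hg.trans_eq (inv_div a 3), hgx⟩, fun p hp => ?_⟩
    exact ⟨(hN M hNM p hp).1, hgF _ (Submodule.subset_span ⟨p, hp, rfl⟩), (hN M hNM p hp).2⟩
  obtain ⟨f, hP, hr⟩ := exists_seq_of_forall_finset_exists _ _ fun s _ => hstep s
  have hm : StrictMono fun k => (f k).1 := fun i j hij => (hr i j hij).1
  refine ⟨_, hm, fun k => (f k).2, fun k => (hP k).1, fun k => ?_⟩
  have hrow : ∀ j, ‖(f k).2 (x (f j).1) - if j = k then 1 else 0‖ =
      if k < j then ‖(f k).2 (x (f j).1)‖ else 0 := fun j => by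
    rcases lt_trichotomy j k with hjk | rfl | hkj
    · simp [hjk.ne, hjk.not_gt, (hr j k hjk).2.1]
    · simp [(hP j).2]
    · simp [hkj.ne', hkj]
  calc ∑' j, ‖(f k).2 (x (f j).1) - if j = k then 1 else 0‖
      = ∑' j, if k < j then ‖(f k).2 (x (f j).1)‖ else 0 := tsum_congr hrow
    _ ≤ ∑' t, ‖(f k).2 (x (t + (f (k + 1)).1))‖ :=
      tsum_ite_lt_comp_le_tsum_nat_add (hsum _) (fun _ => norm_nonneg _) hm k
    _ ≤ δ := (hr k (k + 1) k.lt_succ_self).2.2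

end Banach

open ZeroAtInftyContinuousMap

theorem stmt_4_general (X : Type*) [NormedAddCommGroup X] [NormedSpace ℂ X]
    (T : C₀(ℕ, ℝ) →L[ℝ] X) (a : ℝ) (ha : 0 < a)
    (hT : ∀ x : C₀(ℕ, ℝ), a * ‖x‖ ≤ ‖T x‖) :
    ∃ (S : C₀(ℕ, ℂ) →L[ℂ] X) (b : ℝ), 0 < b ∧ ∀ x : C₀(ℕ, ℂ), b * ‖x‖ ≤ ‖S x‖ := by
  set x : ℕ → X := fun t => T (single t 1)
  have hC : ∀ t, ‖x t‖ ≤ ‖T‖ := fun t => by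
    simpa [x, norm_single] using T.le_opNorm (single t 1)
  have hsep : ∀ i j, i ≠ j → a ≤ dist (x i) (x j) := fun i j hij => by
    have h1 := norm_apply_le (single i (1 : ℝ) - single j 1) i
    simp only [coe_sub, coe_single, Pi.sub_apply, Pi.single_eq_same, Pi.single_eq_of_ne hij,
      sub_zero, norm_one] at h1
    simpa [x, dist_eq_norm, ← map_sub] using (le_mul_of_one_le_right ha.le h1).trans (hT _)
  have hsum : ∀ g : StrongDual ℂ X, Summable fun t => ‖g (x t)‖ := fun g => by
    simpa [x, complexify_single] using summable_norm_apply_single (g.comp (complexify T))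
  obtain ⟨m, hm, g, hg, hδ⟩ := exists_strictMono_tsum_norm_sub_le hC ha hsep hsum one_half_pos
  let S := (complexify T).comp (extendByZeroCLM (𝕜 := ℂ) hm.injective)
  have hSe : ∀ j, S (single j 1) = x (m j) := fun j => by
    simp [S, extendByZeroCLM_single, complexify_single, x]
  refine ⟨S, a / 6, by positivity, fun μ => ?_⟩
  have hμ := norm_le_of_tsum_norm_sub_le (S := S) hg (fun k => by simpa only [hSe] using hδ k) μ
  calc a / 6 * ‖μ‖ = a / 3 * ((1 - 1 / 2) * ‖μ‖) := by ring
    _ ≤ a / 3 * (3 / a * ‖S μ‖) := by gcongr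
    _ = ‖S μ‖ := by field_simp

/-- Let `X` be a complex Banach space. If the underlying real normed
space of `X` contains an isomorphic copy of the real space `c₀` (realized as
`C₀(ℕ, ℝ)`, real sequences converging to zero with the sup norm), i.e. there is a
continuous real-linear map `T : c₀(ℝ) → X` bounded below, then `X` contains an
isomorphic copy of the complex space `c₀` (realized as `C₀(ℕ, ℂ)`), i.e. there is a
continuous complex-linear map `S : c₀(ℂ) → X` bounded below. -/
theorem stmt_4 (X : Type*) [NormedAddCommGroup X] [NormedSpace ℂ X] [CompleteSpace X]
    (T : C₀(ℕ, ℝ) →L[ℝ] X) (a : ℝ) (ha : 0 < a)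
    (hT : ∀ x : C₀(ℕ, ℝ), a * ‖x‖ ≤ ‖T x‖) :
    ∃ (S : C₀(ℕ, ℂ) →L[ℂ] X) (b : ℝ), 0 < b ∧ ∀ x : C₀(ℕ, ℂ), b * ‖x‖ ≤ ‖S x‖ :=
  stmt_4_general X T a ha hT
end

section
/- Let Y be a ℂ-uniformly convex complex Banach space with ℂ-modulus of convexity δ and let 0 < ε < 1. Suppose u, v ∈ Y satisfy ‖u + λ v‖ ≤ 1 for every λ ∈ ℂ with |λ| = 1, and ‖u‖ > 1/(1 + δ(ε)). Then ‖v‖ ≤ ε‖u‖. -/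
/-- Let `Y` be a `ℂ`-uniformly convex complex Banach space with
`ℂ`-modulus of convexity `δ` and let `0 < ε < 1`. If `u, v ∈ Y` satisfy
`‖u + λ v‖ ≤ 1` for every `λ ∈ ℂ` with `|λ| = 1`, and `‖u‖ > 1/(1 + δ(ε))`,
then `‖v‖ ≤ ε ‖u‖`. -/
theorem stmt_6 (Y : Type*) [NormedAddCommGroup Y] [NormedSpace ℂ Y] [CompleteSpace Y]
    (hY : ∀ ε : ℝ, 0 < ε → 0 < cModulus Y ε)
    (ε : ℝ) (hε0 : 0 < ε) (hε1 : ε < 1)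
    (u v : Y)
    (huv : ∀ lam : ℂ, ‖lam‖ = 1 → ‖u + lam • v‖ ≤ 1)
    (hu : 1 / (1 + cModulus Y ε) < ‖u‖) :
    ‖v‖ ≤ ε * ‖u‖ := by
  have hδ : 0 < cModulus Y ε := hY ε hε0
  set δ := cModulus Y ε with hδdef
  by_contra hcon
  push_neg at hcon
  have hδ1 : 0 < 1 + δ := by linarith
  have ha0 : 0 < ‖u‖ := lt_trans (by positivity) hu
  have hb0 : 0 < ‖v‖ := lt_of_le_of_lt (by positivity) hcon
  have ha1 : ‖u‖ ≤ 1 := by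
    have h1 := huv 1 (by norm_num)
    have h2 := huv (-1) (by norm_num)
    have key : u + u = (u + (1:ℂ) • v) + (u + (-1:ℂ) • v) := by
      simp only [one_smul, neg_smul]
      abel
    have h3 : ‖u + u‖ ≤ 2 := by
      rw [key]
      calc ‖(u + (1:ℂ) • v) + (u + (-1:ℂ) • v)‖
          ≤ ‖u + (1:ℂ) • v‖ + ‖u + (-1:ℂ) • v‖ := norm_add_le _ _
        _ ≤ 2 := by linarith
    have h4 : ‖u + u‖ = 2 * ‖u‖ := by
      rw [← two_smul ℝ u, norm_smul]
      norm_num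
    linarith
  set a := ‖u‖ with hadef
  set b := ‖v‖ with hbdef
  set c : ℝ := ε * a / b with hcdef
  have hc0 : 0 < c := by positivity
  have hc1 : c ≤ 1 := by
    rw [hcdef, div_le_one hb0]
    linarith
  set x : Y := ((a : ℂ))⁻¹ • u with hxdef
  set y : Y := ((b : ℂ))⁻¹ • v with hydef
  have hx : ‖x‖ = 1 := by
    rw [hxdef, norm_smul, norm_inv, Complex.norm_real, Real.norm_of_nonneg ha0.le,
      inv_mul_cancel₀ ha0.ne']
  have hy : ‖y‖ = 1 := by
    rw [hydef, norm_smul, norm_inv, Complex.norm_real, Real.norm_of_nonneg hb0.le,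
      inv_mul_cancel₀ hb0.ne']
  set S := { t : ℝ | ∃ lam : ℂ, ‖lam‖ = 1 ∧ t = ‖x + (lam * (ε:ℂ)) • y‖ - 1 } with hSdef
  have hSne : S.Nonempty := ⟨‖x + ((1:ℂ) * (ε:ℂ)) • y‖ - 1, 1, by norm_num, rfl⟩
  have hbound : ∀ t ∈ S, t ≤ 1 / a - 1 := by
    rintro t ⟨lam, hlam, rfl⟩
    have hid : x + (lam * (ε:ℂ)) • y
        = ((a:ℂ))⁻¹ • (((c:ℂ)) • (u + lam • v) + ((1:ℂ) - (c:ℂ)) • u) := by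
      have haC : (a:ℂ) ≠ 0 := Complex.ofReal_ne_zero.2 ha0.ne'
      have hbC : (b:ℂ) ≠ 0 := Complex.ofReal_ne_zero.2 hb0.ne'
      rw [hxdef, hydef, hcdef]
      match_scalars <;> (push_cast; field_simp; try ring)
    have hainv : ‖((a:ℂ))⁻¹‖ = a⁻¹ := by
      rw [norm_inv, Complex.norm_real, Real.norm_of_nonneg ha0.le]
    have hnorm : ‖x + (lam * (ε:ℂ)) • y‖ ≤ a⁻¹ * (c * 1 + (1 - c) * a) := by
      rw [hid, norm_smul, hainv]
      apply mul_le_mul_of_nonneg_left _ (inv_nonneg.2 ha0.le)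
      calc ‖((c:ℂ)) • (u + lam • v) + ((1:ℂ) - (c:ℂ)) • u‖
          ≤ ‖((c:ℂ)) • (u + lam • v)‖ + ‖((1:ℂ) - (c:ℂ)) • u‖ := norm_add_le _ _
        _ ≤ c * 1 + (1 - c) * a := by
            have hcnorm : ‖((c:ℂ))‖ = c := by
              rw [Complex.norm_real, Real.norm_of_nonneg hc0.le]
            have h1c : ‖(1:ℂ) - (c:ℂ)‖ = 1 - c := by
              rw [show (1:ℂ) - (c:ℂ) = ((1 - c : ℝ):ℂ) by push_cast; ring,
                Complex.norm_real, Real.norm_of_nonneg (by linarith)]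
            rw [norm_smul, norm_smul, hcnorm, h1c]
            exact add_le_add
              (mul_le_mul_of_nonneg_left (huv lam hlam) hc0.le) le_rfl
    have h1a : 1 ≤ 1 / a := one_le_one_div ha0 ha1
    have heq : a⁻¹ * (c * 1 + (1 - c) * a) = c * (1 / a) + (1 - c) := by
      field_simp
      try ring
    rw [heq] at hnorm
    nlinarith [mul_nonneg (sub_nonneg.2 hc1) (sub_nonneg.2 h1a)]
  have hSsup : sSup S ≤ 1 / a - 1 := csSup_le hSne hbound
  have hbddBelow : BddBelow { d : ℝ | ∃ x y : Y, ‖x‖ = 1 ∧ ‖y‖ = 1 ∧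
      d = sSup { t : ℝ | ∃ lam : ℂ, ‖lam‖ = 1 ∧ t = ‖x + (lam * (ε:ℂ)) • y‖ - 1 } } := by
    refine ⟨-1, ?_⟩
    rintro d ⟨x', y', hx', hy', rfl⟩
    have hbddA : BddAbove
        { t : ℝ | ∃ lam : ℂ, ‖lam‖ = 1 ∧ t = ‖x' + (lam * (ε:ℂ)) • y'‖ - 1 } := by
      refine ⟨ε, ?_⟩
      rintro t ⟨lam, hlam, rfl⟩
      have h5 : ‖x' + (lam * (ε:ℂ)) • y'‖ ≤ 1 + ε := by
        calc ‖x' + (lam * (ε:ℂ)) • y'‖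
            ≤ ‖x'‖ + ‖(lam * (ε:ℂ)) • y'‖ := norm_add_le _ _
          _ = 1 + ε := by
              rw [norm_smul, hx', hy', norm_mul, hlam, Complex.norm_real,
                Real.norm_of_nonneg hε0.le]
              ring
      simpa using sub_le_sub_right h5 1
    have hel : ‖x' + ((1:ℂ) * (ε:ℂ)) • y'‖ - 1
        ∈ { t : ℝ | ∃ lam : ℂ, ‖lam‖ = 1 ∧ t = ‖x' + (lam * (ε:ℂ)) • y'‖ - 1 } :=
      ⟨1, by norm_num, rfl⟩
    have h6 := le_csSup hbddA hel
    have h0 : (0:ℝ) ≤ ‖x' + ((1:ℂ) * (ε:ℂ)) • y'‖ := norm_nonneg _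
    linarith
  have hle : δ ≤ sSup S := by
    rw [hδdef, cModulus]
    exact csInf_le hbddBelow ⟨x, y, hx, hy, rfl⟩
  have h1 : 1 < a * (1 + δ) := by
    rw [div_lt_iff₀ hδ1] at hu
    linarith
  have h2 : 1 / a < 1 + δ := by
    rw [div_lt_iff₀ ha0]
    nlinarith
  linarith
end

section
/- Let B be a compact Hausdorff topological space, let h₁ be a continuous complex-valued function on B with ‖h₁‖∞ = 1, let 0 < ε < 2, and let t₀ ∈ B satisfy |h₁(t₀)| > 1 − ε/2. Then there exist continuous complex-valued functions h₂ and h₃ on B with ‖h₂‖∞ ≤ 1, ‖h₃‖∞ ≤ 1, h₁ = (h₂ + h₃)/2, |h₂(t₀)| = 1, and ‖h₂ − h₁‖∞ < ε/2. -/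
/-- Let `B` be a compact Hausdorff space, `h₁ ∈ C(B, ℂ)` with
`‖h₁‖∞ = 1`, let `0 < ε < 2`, and let `t₀ ∈ B` satisfy `|h₁(t₀)| > 1 - ε/2`.
Then there are `h₂, h₃ ∈ C(B, ℂ)` with `‖h₂‖∞ ≤ 1`, `‖h₃‖∞ ≤ 1`,
`h₁ = (h₂ + h₃)/2`, `|h₂(t₀)| = 1` and `‖h₂ - h₁‖∞ < ε/2`. -/
theorem stmt_8 (B : Type*) [TopologicalSpace B] [CompactSpace B] [T2Space B]
    (h₁ : C(B, ℂ)) (hh₁ : ‖h₁‖ = 1)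
    (ε : ℝ) (hε0 : 0 < ε) (hε2 : ε < 2)
    (t₀ : B) (ht₀ : 1 - ε / 2 < ‖h₁ t₀‖) :
    ∃ h₂ h₃ : C(B, ℂ), ‖h₂‖ ≤ 1 ∧ ‖h₃‖ ≤ 1 ∧
      h₁ = (2 : ℂ)⁻¹ • (h₂ + h₃) ∧ ‖h₂ t₀‖ = 1 ∧ ‖h₂ - h₁‖ < ε / 2 := by
  set c : ℝ := ‖h₁ t₀‖ with hc
  have hc1 : c ≤ 1 := by rw [← hh₁]; exact h₁.norm_coe_le_norm t₀
  set δ : ℝ := (ε / 2 + (1 - c)) / 2 with hδ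
  have hδpos : 0 < δ := by simp only [hδ]; linarith
  have hδlt : δ < ε / 2 := by simp only [hδ]; linarith
  have hδ1 : 1 - δ > 0 := by linarith
  have hcδ : 1 - δ < c := by simp only [hδ]; linarith
  have hmaxpos : ∀ t : B, 0 < max ‖h₁ t‖ (1 - δ) := fun t =>
    lt_of_lt_of_le hδ1 (le_max_right _ _)
  have hcont : Continuous fun t => (((max ‖h₁ t‖ (1 - δ))⁻¹ : ℝ) : ℂ) * h₁ t := by
    refine Continuous.mul (Complex.continuous_ofReal.comp ?_) (map_continuous h₁)
    exact ((map_continuous h₁).norm.max continuous_const).inv₀ fun t => (hmaxpos t).ne'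
  set h₂ : C(B, ℂ) := ⟨fun t => (((max ‖h₁ t‖ (1 - δ))⁻¹ : ℝ) : ℂ) * h₁ t, hcont⟩ with hh₂
  set h₃ : C(B, ℂ) := (2 : ℂ) • h₁ - h₂ with hh₃
  have hx1 : ∀ t : B, ‖h₁ t‖ ≤ 1 := fun t => by
    rw [← hh₁]; exact h₁.norm_coe_le_norm t
  have hnorm₂ : ∀ t : B, ‖h₂ t‖ = (max ‖h₁ t‖ (1 - δ))⁻¹ * ‖h₁ t‖ := fun t => by
    simp only [hh₂, ContinuousMap.coe_mk, norm_mul, Complex.norm_real, Real.norm_eq_abs,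
      abs_of_pos (inv_pos.mpr (hmaxpos t))]
  refine ⟨h₂, h₃, ?_, ?_, ?_, ?_, ?_⟩
  · refine ContinuousMap.norm_le _ zero_le_one |>.mpr fun t => ?_
    rw [hnorm₂ t, inv_mul_le_iff₀ (hmaxpos t), mul_one]
    exact le_max_left _ _
  · refine ContinuousMap.norm_le _ zero_le_one |>.mpr fun t => ?_
    have heq : h₃ t = (((2 - (max ‖h₁ t‖ (1 - δ))⁻¹ : ℝ)) : ℂ) * h₁ t := by
      simp only [hh₃, hh₂, ContinuousMap.sub_apply, ContinuousMap.smul_apply,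
        ContinuousMap.coe_mk, Complex.ofReal_sub, smul_eq_mul]
      push_cast
      ring
    rw [heq, norm_mul, Complex.norm_real, Real.norm_eq_abs]
    set x := ‖h₁ t‖ with hxdef
    set M := max x (1 - δ) with hM
    have hMx : x ≤ M := le_max_left _ _
    have hMpos : 0 < M := hmaxpos t
    have hx0 : 0 ≤ x := norm_nonneg _
    have hM1 : M ≤ 1 := max_le (hx1 t) (by linarith)
    have hMinv1 : (1:ℝ) ≤ M⁻¹ := (one_le_inv₀ hMpos).mpr hM1
    have hs1 : M⁻¹ * x ≤ 1 := by rw [inv_mul_le_iff₀ hMpos, mul_one]; exact hMx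
    have hxs : x ≤ M⁻¹ * x := le_mul_of_one_le_left hx0 hMinv1
    have hs0 : 0 ≤ M⁻¹ * x := le_trans hx0 hxs
    rw [← abs_of_nonneg hx0, ← abs_mul]
    rw [abs_le]
    constructor <;> nlinarith [hx1 t]
  · ext t
    simp only [hh₃, ContinuousMap.smul_apply, ContinuousMap.add_apply,
      ContinuousMap.sub_apply, smul_eq_mul]
    ring
  · rw [hnorm₂ t₀, max_eq_left (le_of_lt hcδ), ← hc, inv_mul_cancel₀]
    linarith
  · have hle : ‖h₂ - h₁‖ ≤ δ := by
      refine ContinuousMap.norm_le _ hδpos.le |>.mpr fun t => ?_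
      have heq : h₂ t - h₁ t = ((((max ‖h₁ t‖ (1 - δ))⁻¹ - 1 : ℝ)) : ℂ) * h₁ t := by
        simp only [hh₂, ContinuousMap.coe_mk]
        push_cast; ring
      rw [ContinuousMap.sub_apply, heq, norm_mul, Complex.norm_real, Real.norm_eq_abs]
      set x := ‖h₁ t‖ with hxdef
      set M := max x (1 - δ) with hM
      have hMx : x ≤ M := le_max_left _ _
      have hMδ : 1 - δ ≤ M := le_max_right _ _
      have hMpos : 0 < M := hmaxpos t
      have hx0 : 0 ≤ x := norm_nonneg _
      have hM1 : M ≤ 1 := max_le (hx1 t) (by linarith)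
      have hMinv1 : (1:ℝ) ≤ M⁻¹ := (one_le_inv₀ hMpos).mpr hM1
      have habs : |M⁻¹ - 1| = M⁻¹ - 1 := abs_of_nonneg (by linarith)
      rw [habs]
      have hinv : M * M⁻¹ = 1 := mul_inv_cancel₀ hMpos.ne'
      -- (M⁻¹ - 1) * x ≤ δ
      rcases max_choice x (1 - δ) with h | h
      · -- M = x : (x⁻¹ - 1) x = 1 - x ≤ δ
        rw [← h] at *
        have : (M⁻¹ - 1) * M = 1 - M := by
          rw [sub_mul, inv_mul_cancel₀ hMpos.ne', one_mul]
        rw [this]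
        have : 1 - δ ≤ M := by rw [hM, h]; linarith [hMδ]
        linarith
      · -- M = 1 - δ, x ≤ 1 - δ
        have hxle : x ≤ 1 - δ := by rw [← h]; exact hMx
        nlinarith [mul_le_mul_of_nonneg_left hxle (sub_nonneg.mpr hMinv1)]
    linarith
end
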